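/- arXiv:2305.02922 — 8 statements merged into one kernel-verified Lean document; each statement's English description precedes it below -/
import Mathlib

section
/- Let T be a tournament, let v_0, v_1, …, v_k (with k ≥ 1 and v_0 ≠ v_k) be the vertices of a shortest directed path from v_0 to v_k in T, and let (D_0, D_1, …, D_{k+1}) be the associated path decomposition. Then V(T) = D_0 ∪ D_1 ∪ ⋯ ∪ D_{k+1}. -/
/-- A tournament on a vertex type `V`: for every two distinct vertices exactly one
of the two possible arcs is present, and there are no loops. -/
structure Tournament (V : Type) where
  arc : V → V → Prop
  asymm : ∀ u v, arc u v → ¬ arc v u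
  total : ∀ u v, u ≠ v → arc u v ∨ arc v u

namespace Tournament

variable {V : Type}

/-- A set of vertices is transitive (acyclic) if it contains no directed triangle. -/
def IsTransitiveSet (T : Tournament V) (S : Set V) : Prop :=
  ∀ a ∈ S, ∀ b ∈ S, ∀ c ∈ S, ¬ (T.arc a b ∧ T.arc b c ∧ T.arc c a)

/-- Out-neighborhood `N⁺(v)`. -/
def outN (T : Tournament V) (v : V) : Set V := {w | T.arc v w}

/-- In-neighborhood `N⁻(v)`. -/
def inN (T : Tournament V) (v : V) : Set V := {w | T.arc w v}

/-- Arc neighborhood `N(uv)` of an arc `u → v`: vertices forming a directed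
triangle with the arc. -/
def arcNbhd (T : Tournament V) (u v : V) : Set V := {w | T.arc v w ∧ T.arc w u}

/-- `T.ColorableOn S k` means the induced subtournament `T[S]` can be partitioned
into at most `k` transitive sets. -/
def ColorableOn (T : Tournament V) (S : Set V) (k : ℕ) : Prop :=
  ∃ f : V → ℕ, (∀ v ∈ S, f v < k) ∧ ∀ i : ℕ, T.IsTransitiveSet {v | v ∈ S ∧ f v = i}

/-- The dichromatic number of `T`: the least `k` such that `V(T)` can be
partitioned into `k` transitive sets. -/
noncomputable def dichromaticNumber (T : Tournament V) : ℕ :=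
  sInf {k | T.ColorableOn Set.univ k}

/-- An arc `u → v` is heavy if `N(uv)` contains a directed triangle. -/
def IsHeavy (T : Tournament V) (u v : V) : Prop :=
  T.arc u v ∧ ∃ a b c,
    a ∈ T.arcNbhd u v ∧ b ∈ T.arcNbhd u v ∧ c ∈ T.arcNbhd u v ∧
    T.arc a b ∧ T.arc b c ∧ T.arc c a

/-- A tournament is light if it has no heavy arc. -/
def IsLight (T : Tournament V) : Prop := ∀ u v, ¬ T.IsHeavy u v

/-- The induced subtournament `T[S]` is light: for every arc within `S`, the part
of its arc neighborhood inside `S` is transitive. -/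
def LightOn (T : Tournament V) (S : Set V) : Prop :=
  ∀ u ∈ S, ∀ v ∈ S, T.arc u v → T.IsTransitiveSet (T.arcNbhd u v ∩ S)

/-- `S` is the vertex set of a directed triangle. -/
def IsTriangle (T : Tournament V) (S : Set V) : Prop :=
  ∃ a b c, S = {a, b, c} ∧ T.arc a b ∧ T.arc b c ∧ T.arc c a

/-- `S ⇒ U`: every arc between `S` and `U` is directed from `S` to `U`. -/
def Beats (T : Tournament V) (S U : Set V) : Prop :=
  ∀ s ∈ S, ∀ u ∈ U, T.arc s u

/-- `X 0, …, X (L-1)` is a `C₃`-chain of length `L`: pairwise vertex-disjoint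
directed triangles with `X i ⇒ X (i+1)`. -/
def IsC3Chain (T : Tournament V) (X : ℕ → Set V) (L : ℕ) : Prop :=
  (∀ i < L, T.IsTriangle (X i)) ∧
  (∀ i < L, ∀ j < L, i ≠ j → Disjoint (X i) (X j)) ∧
  (∀ i, i + 1 < L → T.Beats (X i) (X (i + 1)))

/-- `v 0, …, v k` are the vertices of a shortest directed path from `v 0` to `v k`:
consecutive arcs are present, and no directed path (walk) from `v 0` to `v k`
has fewer than `k` arcs. -/
def IsShortestPath (T : Tournament V) (v : ℕ → V) (k : ℕ) : Prop :=
  (∀ i < k, T.arc (v i) (v (i + 1))) ∧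
  (∀ m : ℕ, ∀ p : ℕ → V, p 0 = v 0 → p m = v k →
    (∀ i < m, T.arc (p i) (p (i + 1))) → k ≤ m)

/-- The path decomposition `D 0, …, D (k+1)` associated to the path `v 0, …, v k`:
`D 0 = N⁺(v 0)`, `D i = N(e i) \ (D 0 ∪ ⋯ ∪ D (i-1))` for `1 ≤ i ≤ k` where
`e i` is the arc `v (i-1) → v i`, and `D (k+1) = N⁻(v k) \ (D 0 ∪ ⋯ ∪ D k)`. -/
def PathDecomp (T : Tournament V) (v : ℕ → V) (k : ℕ) (D : ℕ → Set V) : Prop :=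
  D 0 = T.outN (v 0) ∧
  (∀ i, 1 ≤ i → i ≤ k → D i = T.arcNbhd (v (i - 1)) (v i) \ ⋃ j < i, D j) ∧
  D (k + 1) = T.inN (v k) \ ⋃ j < k + 1, D j

end Tournament

/- A vertex `w` outside `N⁺(v₀) ∪ N⁻(vₖ)` is beaten by some path vertex (by `vₖ`, or by `vₖ₋₁`
if `w = vₖ`) but not by `v₀`, so some arc `vᵢ → vᵢ₊₁` of the path has `w → vᵢ` and `vᵢ₊₁ → w`,
i.e. `w ∈ N(eᵢ₊₁)`. As `Dᵢ₊₁` is `N(eᵢ₊₁)` minus the earlier parts, `w ∈ D₀ ∪ ⋯ ∪ Dᵢ₊₁`. -/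

theorem Set.mem_biUnion_le_of_eq_diff {α : Type*} {D : ℕ → Set α} {A : Set α} {w : α} {i n : ℕ}
    (hD : D i = A \ ⋃ j < i, D j) (hw : w ∈ A) (hin : i ≤ n) : w ∈ ⋃ j ≤ n, D j := by
  simp only [Set.mem_iUnion]
  by_cases hprev : w ∈ ⋃ j < i, D j
  · simp only [Set.mem_iUnion] at hprev
    obtain ⟨j, hji, hwj⟩ := hprev
    exact ⟨j, by omega, hwj⟩
  · exact ⟨i, hin, hD ▸ ⟨hw, hprev⟩⟩

namespace Tournament

variable {V : Type} (T : Tournament V)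

theorem arc_of_not_arc {u w : V} (hne : u ≠ w) (h : ¬ T.arc u w) : T.arc w u :=
  (T.total w u hne.symm).resolve_right h

theorem exists_mem_arcNbhd_of_arc {v : ℕ → V} {w : V} (h0 : ¬ T.arc (v 0) w) :
    ∀ {n : ℕ}, (∀ i < n, T.arc (v i) (v (i + 1))) → T.arc (v n) w →
      ∃ i < n, w ∈ T.arcNbhd (v i) (v (i + 1))
  | 0, _, hw => absurd hw h0
  | n + 1, hpath, hw => by
    by_cases hn : T.arc (v n) w
    · obtain ⟨i, hi, hwi⟩ := exists_mem_arcNbhd_of_arc h0 (fun i hi => hpath i (by omega)) hn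
      exact ⟨i, by omega, hwi⟩
    · have hne : v n ≠ w := by
        rintro rfl
        exact T.asymm _ _ (hpath n (by omega)) hw
      exact ⟨n, by omega, hw, T.arc_of_not_arc hne hn⟩

theorem exists_mem_arcNbhd_of_not_mem {k : ℕ} (hk : 1 ≤ k) {v : ℕ → V}
    (hpath : ∀ i < k, T.arc (v i) (v (i + 1))) {w : V}
    (hout : w ∉ T.outN (v 0)) (hin : w ∉ T.inN (v k)) :
    ∃ i < k, w ∈ T.arcNbhd (v i) (v (i + 1)) := by
  have hbeaten : ∃ n ≤ k, T.arc (v n) w := by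
    by_cases hw : w = v k
    · refine ⟨k - 1, by omega, ?_⟩
      simpa [hw, Nat.sub_add_cancel hk] using hpath (k - 1) (by omega)
    · exact ⟨k, le_rfl, T.arc_of_not_arc hw hin⟩
  obtain ⟨n, hnk, hn⟩ := hbeaten
  obtain ⟨i, hi, hwi⟩ :=
    T.exists_mem_arcNbhd_of_arc hout (fun i hi => hpath i (by omega)) hn
  exact ⟨i, by omega, hwi⟩

end Tournament

theorem stmt_0_general {V : Type} (T : Tournament V)
    (k : ℕ) (hk : 1 ≤ k) (v : ℕ → V)
    (hpath : T.IsShortestPath v k)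
    (D : ℕ → Set V) (hD : T.PathDecomp v k D) :
    (⋃ i ≤ k + 1, D i) = Set.univ := by
  obtain ⟨h0, hmid, hlast⟩ := hD
  refine Set.eq_univ_of_forall fun w => ?_
  by_cases hout : w ∈ T.outN (v 0)
  · exact Set.mem_biUnion_le_of_eq_diff (i := 0) (by simpa using h0) hout (Nat.zero_le _)
  by_cases hin : w ∈ T.inN (v k)
  · exact Set.mem_biUnion_le_of_eq_diff hlast hin le_rfl
  obtain ⟨i, hik, hwi⟩ := T.exists_mem_arcNbhd_of_not_mem hk hpath.1 hout hin
  exact Set.mem_biUnion_le_of_eq_diff (hmid (i + 1) (by omega) (by omega)) (by simpa using hwi)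
    (by omega)

theorem stmt_0 {V : Type} [Fintype V] (T : Tournament V)
    (k : ℕ) (hk : 1 ≤ k) (v : ℕ → V) (hne : v 0 ≠ v k)
    (hpath : T.IsShortestPath v k)
    (D : ℕ → Set V) (hD : T.PathDecomp v k D) :
    (⋃ i ≤ k + 1, D i) = Set.univ :=
  stmt_0_general T k hk v hpath D hD
end

section
/- Let T be a tournament, let v_0, v_1, …, v_k (with k ≥ 1 and v_0 ≠ v_k) be the vertices of a shortest directed path from v_0 to v_k in T, and let (D_0, D_1, …, D_{k+1}) be the associated path decomposition. If 0 ≤ i, j ≤ k+1 with j ≥ i+5, then for every u ∈ D_i and w ∈ D_j the arc between them is directed from w to u. -/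
/-!
A vertex `u ∈ D i` is an out-neighbour of `v i`, and a vertex `w ∈ D j` with `j ≥ 1` is an
in-neighbour of `v (j - 1)`. If the arc went `u → w` (or `u = w`), then `v i, u, w, v (j - 1)`
would be a walk of length at most `3`, so splicing it into the path would give a walk from
`v 0` to `v k` of length at most `k - (j - 1 - i) + 3 < k`.
-/

namespace Tournament

variable {V : Type} (T : Tournament V)

def IsWalk (p : ℕ → V) (m : ℕ) : Prop :=
  ∀ s < m, T.arc (p s) (p (s + 1))

/-- The walk `p 0, …, p m` followed by `q`, where `q 0` is meant to be `p m`. -/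
def walkAppend (p q : ℕ → V) (m : ℕ) : ℕ → V :=
  fun s => if s ≤ m then p s else q (s - m)

variable {T}

@[simp]
lemma walkAppend_zero (p q : ℕ → V) (m : ℕ) : walkAppend p q m 0 = p 0 := by
  simp [walkAppend]

lemma walkAppend_add {p q : ℕ → V} {m : ℕ} (h : p m = q 0) (n : ℕ) :
    walkAppend p q m (m + n) = q n := by
  unfold walkAppend
  split_ifs with hn
  · obtain rfl : n = 0 := by omega
    simpa using h
  · simp

lemma IsWalk.append {p q : ℕ → V} {m n : ℕ} (hp : T.IsWalk p m) (hq : T.IsWalk q n)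
    (h : p m = q 0) : T.IsWalk (walkAppend p q m) (m + n) := by
  intro s hs
  rcases lt_or_ge s m with hsm | hms
  · simpa [walkAppend, hsm.le, Nat.succ_le_of_lt hsm] using hp s hsm
  · obtain ⟨r, rfl⟩ := Nat.exists_eq_add_of_le hms
    rw [add_assoc, walkAppend_add h, walkAppend_add h]
    exact hq r (by omega)

lemma IsWalk.mono {p : ℕ → V} {m n : ℕ} (hp : T.IsWalk p m) (h : n ≤ m) : T.IsWalk p n :=
  fun s hs => hp s (by omega)

lemma IsWalk.shift {p : ℕ → V} {m : ℕ} (hp : T.IsWalk p m) (t : ℕ) :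
    T.IsWalk (fun s => p (t + s)) (m - t) :=
  fun s hs => hp (t + s) (by omega)

lemma IsShortestPath.le_add_of_walk {v : ℕ → V} {k : ℕ} (hpath : T.IsShortestPath v k)
    {i t m : ℕ} (hi : i ≤ k) (ht : t ≤ k) {p : ℕ → V} (hp : T.IsWalk p m)
    (hp0 : p 0 = v i) (hpm : p m = v t) : t ≤ i + m := by
  have hv : T.IsWalk v k := hpath.1
  let q : ℕ → V := fun s => v (t + s)
  have hend : walkAppend v p i (i + m) = q 0 := by rw [walkAppend_add hp0.symm, hpm]; rfl
  have hW := ((hv.mono hi).append hp hp0.symm).append (hv.shift t) hend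
  have hWend : walkAppend (walkAppend v p i) q (i + m) (i + m + (k - t)) = v k := by
    rw [walkAppend_add hend]; exact congrArg v (by omega)
  have := hpath.2 _ _ (by simp) hWend hW
  omega

lemma PathDecomp.arc_of_mem {v : ℕ → V} {k : ℕ} {D : ℕ → Set V} (hD : T.PathDecomp v k D)
    {i : ℕ} (hi : i ≤ k) {u : V} (hu : u ∈ D i) : T.arc (v i) u := by
  rcases Nat.eq_zero_or_pos i with rfl | hi0
  · rwa [hD.1] at hu
  · rw [hD.2.1 i hi0 hi] at hu
    exact hu.1.1

lemma PathDecomp.arc_pred_of_mem {v : ℕ → V} {k : ℕ} {D : ℕ → Set V} (hD : T.PathDecomp v k D)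
    {j : ℕ} (hj0 : 1 ≤ j) (hj : j ≤ k + 1) {w : V} (hw : w ∈ D j) : T.arc w (v (j - 1)) := by
  rcases hj.lt_or_eq with hjk | rfl
  · rw [hD.2.1 j hj0 (by omega)] at hw
    exact hw.1.2
  · rw [hD.2.2] at hw
    exact hw.1

end Tournament

theorem stmt_1_general {V : Type} (T : Tournament V)
    (k : ℕ) (v : ℕ → V)
    (hpath : T.IsShortestPath v k)
    (D : ℕ → Set V) (hD : T.PathDecomp v k D)
    (i j : ℕ) (hj : j ≤ k + 1) (hij : i + 5 ≤ j)
    (u w : V) (hu : u ∈ D i) (hw : w ∈ D j) :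
    T.arc w u := by
  have hvu := hD.arc_of_mem (by omega) hu
  have hwv := hD.arc_pred_of_mem (by omega) hj hw
  by_contra hwu
  have : j - 1 ≤ i + 3 := by
    obtain rfl | huw := eq_or_ne u w
    · have hp : T.IsWalk (fun s => [v i, u, v (j - 1)].getD s u) 2 := by
        intro s hs; interval_cases s <;> simpa
      have := hpath.le_add_of_walk (by omega) (by omega) hp rfl rfl
      omega
    · have harc_uw := (T.total u w huw).resolve_right hwu
      have hp : T.IsWalk (fun s => [v i, u, w, v (j - 1)].getD s u) 3 := by
        intro s hs; interval_cases s <;> simpa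
      exact hpath.le_add_of_walk (by omega) (by omega) hp rfl rfl
  omega

theorem stmt_1 {V : Type} [Fintype V] (T : Tournament V)
    (k : ℕ) (hk : 1 ≤ k) (v : ℕ → V) (hne : v 0 ≠ v k)
    (hpath : T.IsShortestPath v k)
    (D : ℕ → Set V) (hD : T.PathDecomp v k D)
    (i j : ℕ) (hj : j ≤ k + 1) (hij : i + 5 ≤ j)
    (u w : V) (hu : u ∈ D i) (hw : w ∈ D j) :
    T.arc w u :=
  stmt_1_general T k v hpath D hD i j hj hij u w hu hw
end

section
/- Let T be a 2-colorable tournament. Then the undirected graph on vertex set V(T) whose edges are the pairs {u,v} such that u→v or v→u is a heavy arc of T is bipartite. -/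
/-!
If a heavy arc `u → v` had both ends in the same transitive class, every vertex of `N(uv)`
would have to lie in the other class, since it closes a directed triangle with `u` and `v`.
The directed triangle inside `N(uv)` would then be monochromatic. So the two classes of a
2-colouring of `T` properly colour the graph of heavy arcs.
-/

namespace Tournament

variable {V : Type} {T : Tournament V} {f : V → ℕ}

lemma not_arc_cycle_of_color_eq (htrans : ∀ i, T.IsTransitiveSet {v | v ∈ Set.univ ∧ f v = i})
    {a b c : V} (hab : f a = f b) (hbc : f b = f c) :
    ¬ (T.arc a b ∧ T.arc b c ∧ T.arc c a) :=
  htrans (f a) a ⟨trivial, rfl⟩ b ⟨trivial, hab.symm⟩ c ⟨trivial, (hab.trans hbc).symm⟩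

lemma color_ne_of_mem_arcNbhd (htrans : ∀ i, T.IsTransitiveSet {v | v ∈ Set.univ ∧ f v = i})
    {u v w : V} (huv : T.arc u v) (hw : w ∈ T.arcNbhd u v) (h : f u = f v) :
    f w ≠ f u := fun hwu =>
  not_arc_cycle_of_color_eq htrans h (h.symm.trans hwu.symm) ⟨huv, hw.1, hw.2⟩

lemma color_ne_of_isHeavy (hf : ∀ v ∈ Set.univ, f v < 2)
    (htrans : ∀ i, T.IsTransitiveSet {v | v ∈ Set.univ ∧ f v = i})
    {u v : V} (h : T.IsHeavy u v) : f u ≠ f v := by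
  intro huv
  obtain ⟨harc, a, b, c, ha, hb, hc, hcycle⟩ := h
  have hfa := color_ne_of_mem_arcNbhd htrans harc ha huv
  have hfb := color_ne_of_mem_arcNbhd htrans harc hb huv
  have hfc := color_ne_of_mem_arcNbhd htrans harc hc huv
  have := hf a trivial; have := hf b trivial; have := hf c trivial; have := hf u trivial
  exact not_arc_cycle_of_color_eq htrans (by omega) (by omega) hcycle

end Tournament

theorem stmt_4_general {V : Type} (T : Tournament V)
    (h2col : T.ColorableOn Set.univ 2) :
    (SimpleGraph.fromRel (fun u v => T.IsHeavy u v)).Colorable 2 := by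
  obtain ⟨f, hf, htrans⟩ := h2col
  refine ⟨SimpleGraph.Coloring.mk (fun v => ⟨f v, hf v trivial⟩) ?_⟩
  rintro u v ⟨-, huv | hvu⟩ hcol <;> simp only [Fin.mk.injEq] at hcol
  · exact Tournament.color_ne_of_isHeavy hf htrans huv hcol
  · exact Tournament.color_ne_of_isHeavy hf htrans hvu hcol.symm

theorem stmt_4 {V : Type} [Fintype V] (T : Tournament V)
    (h2col : T.ColorableOn Set.univ 2) :
    (SimpleGraph.fromRel (fun u v => T.IsHeavy u v)).Colorable 2 :=
  stmt_4_general T h2col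
end

section
/- Let k ≥ 1 and let T be a k-colorable tournament with at least two vertices. Then there exist two distinct vertices u and w of T such that the induced subtournament T[N⁺(u) ∪ N⁻(w)] is (k−1)-colorable. -/
theorem exists_forall_not_rel_of_transOn {α : Type*} [Finite α] {R : α → α → Prop} {C : Set α}
    (hirr : ∀ a, ¬ R a a) (htrans : ∀ a ∈ C, ∀ b ∈ C, ∀ c ∈ C, R a b → R b c → R a c)
    (hne : C.Nonempty) : ∃ w ∈ C, ∀ x ∈ C, ¬ R x w := by
  let S : α → α → Prop := fun a b => a ∈ C ∧ b ∈ C ∧ R a b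
  have : IsTrans α S := ⟨fun a b c ⟨ha, hb, hab⟩ ⟨_, hc, hbc⟩ =>
    ⟨ha, hc, htrans a ha b hb c hc hab hbc⟩⟩
  have : Std.Irrefl S := ⟨fun a ⟨_, _, haa⟩ => hirr a haa⟩
  obtain ⟨w, hw, hmin⟩ := (Finite.wellFounded_of_trans_of_irrefl S).has_min C hne
  exact ⟨w, hw, fun x hx hxw => hmin x hx ⟨hx, hw, hxw⟩⟩

namespace Tournament

variable {V : Type} {T : Tournament V}

theorem not_arc_self (T : Tournament V) (v : V) : ¬ T.arc v v :=
  fun h => T.asymm v v h h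

theorem IsTransitiveSet.mono {S U : Set V} (hU : T.IsTransitiveSet U) (h : S ⊆ U) :
    T.IsTransitiveSet S :=
  fun a ha b hb c hc => hU a (h ha) b (h hb) c (h hc)

theorem IsTransitiveSet.arc_trans {C : Set V} (hC : T.IsTransitiveSet C) {a b c : V}
    (ha : a ∈ C) (hb : b ∈ C) (hc : c ∈ C) (hab : T.arc a b) (hbc : T.arc b c) :
    T.arc a c := by
  have hac : a ≠ c := by
    rintro rfl
    exact T.asymm a b hab hbc
  exact (T.total a c hac).resolve_right fun hca => hC a ha b hb c hc ⟨hab, hbc, hca⟩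

theorem IsTransitiveSet.exists_source [Finite V] {C : Set V} (hC : T.IsTransitiveSet C)
    (hne : C.Nonempty) : ∃ w ∈ C, ∀ x ∈ C, ¬ T.arc x w :=
  exists_forall_not_rel_of_transOn T.not_arc_self
    (fun _ ha _ hb _ hc => hC.arc_trans ha hb hc) hne

theorem IsTransitiveSet.exists_sink [Finite V] {C : Set V} (hC : T.IsTransitiveSet C)
    (hne : C.Nonempty) : ∃ u ∈ C, ∀ x ∈ C, ¬ T.arc u x :=
  exists_forall_not_rel_of_transOn (R := flip T.arc) T.not_arc_self
    (fun _ ha _ hb _ hc hab hbc => hC.arc_trans hc hb ha hbc hab) hne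

theorem eq_of_mem_of_sink_of_source {C : Set V} {u v : V} (hu : ∀ x ∈ C, ¬ T.arc u x)
    (hw : ∀ x ∈ C, ¬ T.arc x u) (hv : v ∈ C) : v = u := by
  by_contra hvu
  rcases T.total v u hvu with h | h
  exacts [hw v hv h, hu v hv h]

theorem IsTransitiveSet.exists_ne_disjoint_outN_union_inN [Finite V] [Nontrivial V]
    {C : Set V} (hC : T.IsTransitiveSet C) :
    ∃ u w, u ≠ w ∧ ∀ v ∈ C, v ∉ T.outN u ∪ T.inN w := by
  rcases C.eq_empty_or_nonempty with rfl | hne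
  · obtain ⟨u, w, huw⟩ := exists_pair_ne V
    exact ⟨u, w, huw, fun _ hv => hv.elim⟩
  obtain ⟨u, huC, hu⟩ := hC.exists_sink hne
  obtain ⟨w, hwC, hw⟩ := hC.exists_source hne
  by_cases huw : u = w
  · subst huw
    obtain ⟨v, hvu⟩ := exists_ne u
    have hCu : ∀ x ∈ C, x = u := fun x hx => eq_of_mem_of_sink_of_source hu hw hx
    rcases T.total v u hvu with hvu' | huv
    · refine ⟨u, v, hvu.symm, fun x hx hxN => ?_⟩
      obtain rfl := hCu x hx
      exact hxN.elim (T.not_arc_self x) (T.asymm v x hvu')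
    · refine ⟨v, u, hvu, fun x hx hxN => ?_⟩
      obtain rfl := hCu x hx
      exact hxN.elim (T.asymm x v huv) (T.not_arc_self x)
  · exact ⟨u, w, huw, fun v hv hvN => hvN.elim (hu v hv) (hw v hv)⟩

theorem colorableOn_sub_one_of_forall_ne {S : Set V} {f : V → ℕ} {k c : ℕ} (hc : c < k)
    (hf : ∀ v ∈ S, f v < k) (htr : ∀ i, T.IsTransitiveSet {v | v ∈ S ∧ f v = i})
    (hS : ∀ v ∈ S, f v ≠ c) : T.ColorableOn S (k - 1) := by
  refine ⟨fun v => if f v < c then f v else f v - 1, fun v hv => ?_, fun i => ?_⟩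
  · have := hf v hv
    have := hS v hv
    dsimp only
    split_ifs <;> omega
  · refine (htr (if i < c then i else i + 1)).mono ?_
    rintro v ⟨hvS, hvi : (if f v < c then f v else f v - 1) = i⟩
    have := hS v hvS
    refine ⟨hvS, ?_⟩
    split_ifs at hvi ⊢ <;> omega

end Tournament

theorem stmt_6_general {V : Type} [Fintype V] (T : Tournament V)
    (k : ℕ) (hcard : 2 ≤ Fintype.card V)
    (hcol : T.ColorableOn Set.univ k) :
    ∃ u w : V, u ≠ w ∧ T.ColorableOn (T.outN u ∪ T.inN w) (k - 1) := by
  have : Nontrivial V := Fintype.one_lt_card_iff_nontrivial.mp hcard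
  obtain ⟨f, hf, htr⟩ := hcol
  obtain ⟨x, -⟩ := exists_pair_ne V
  have hclass : T.IsTransitiveSet {v | f v = f x} :=
    (htr (f x)).mono fun v hv => ⟨trivial, hv⟩
  obtain ⟨u, w, huw, hdisj⟩ := hclass.exists_ne_disjoint_outN_union_inN
  refine ⟨u, w, huw, Tournament.colorableOn_sub_one_of_forall_ne (hf x trivial)
    (fun v _ => hf v trivial) (fun i => (htr i).mono ?_) fun v hv hvx => hdisj v hvx hv⟩
  exact fun v hv => ⟨trivial, hv.2⟩

theorem stmt_6 {V : Type} [Fintype V] (T : Tournament V)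
    (k : ℕ) (hk : 1 ≤ k) (hcard : 2 ≤ Fintype.card V)
    (hcol : T.ColorableOn Set.univ k) :
    ∃ u w : V, u ≠ w ∧ T.ColorableOn (T.outN u ∪ T.inN w) (k - 1) :=
  stmt_6_general T k hcard hcol
end

section
/- Let T be a light tournament and let X_1, …, X_ℓ be a C₃-chain in T. Then the chain has no backwards arcs: for all i < j, every arc between a vertex of X_i and a vertex of X_j is directed from X_i to X_j (i.e., X_i ⇒ X_j). -/
/-!
A light tournament cannot have a backwards arc `c → a` whose ends are separated by a
directed triangle `Y` with `a ⇒ Y ⇒ c`: then `Y ⊆ N(ca)` and `c → a` would be heavy.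
Hence `⇒` passes through the triangles of a `C₃`-chain, and induction along the chain gives
`X i ⇒ X j` for all `i < j`.
-/

namespace Tournament

variable {V : Type} {T : Tournament V}

theorem IsLight.arc_of_triangle_between (hlight : T.IsLight) {Y : Set V} (hY : T.IsTriangle Y)
    {a c : V} (hac : a ≠ c) (haY : ∀ y ∈ Y, T.arc a y) (hYc : ∀ y ∈ Y, T.arc y c) :
    T.arc a c := by
  obtain ⟨x, y, z, rfl, hxy, hyz, hzx⟩ := hY
  have hnbhd : ∀ w ∈ ({x, y, z} : Set V), w ∈ T.arcNbhd c a := fun w hw => ⟨haY w hw, hYc w hw⟩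
  refine (T.total a c hac).resolve_right fun hca => hlight c a ⟨hca, x, y, z, ?_, ?_, ?_, hxy, hyz, hzx⟩
  all_goals exact hnbhd _ (by simp)

theorem IsLight.beats_trans (hlight : T.IsLight) {A Y C : Set V} (hY : T.IsTriangle Y)
    (hAC : Disjoint A C) (hAY : T.Beats A Y) (hYC : T.Beats Y C) : T.Beats A C :=
  fun a ha c hc => hlight.arc_of_triangle_between hY (hAC.ne_of_mem ha hc)
    (hAY a ha) (fun y hy => hYC y hy c hc)

end Tournament

theorem stmt_12_general {V : Type} (T : Tournament V) (hlight : T.IsLight)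
    (L : ℕ) (X : ℕ → Set V) (hchain : T.IsC3Chain X L) :
    ∀ i j : ℕ, i < j → j < L → T.Beats (X i) (X j) := by
  obtain ⟨htri, hdisj, hcons⟩ := hchain
  intro i j hij
  induction j, hij using Nat.le_induction with
  | base => exact hcons i
  | succ j hij ih =>
    intro hjL
    exact hlight.beats_trans (htri j (by omega)) (hdisj i (by omega) (j + 1) hjL (by omega))
      (ih (by omega)) (hcons j hjL)

theorem stmt_12 {V : Type} [Fintype V] (T : Tournament V) (hlight : T.IsLight)
    (L : ℕ) (X : ℕ → Set V) (hchain : T.IsC3Chain X L) :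
    ∀ i j : ℕ, i < j → j < L → T.Beats (X i) (X j) :=
  stmt_12_general T hlight L X hchain
end

section
/- Let T be a light tournament, let X_1, …, X_ℓ be a C₃-chain in T, and let w be a vertex of T not belonging to any X_i. (1) If w ⇒ X_i for some i, then w ⇒ X_j for all j with i ≤ j ≤ ℓ. (2) If X_i ⇒ w for some i, then X_j ⇒ w for all j with 1 ≤ j ≤ i. -/
namespace Tournament

variable {V : Type} {T : Tournament V}

/-- Otherwise `S ⊆ N(vu)` and the arc `v → u` would be heavy. -/
theorem IsLight.arc_of_triangle_between_s13 (hT : T.IsLight) {S : Set V} (hS : T.IsTriangle S)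
    {u v : V} (huv : u ≠ v) (hu : ∀ s ∈ S, T.arc u s) (hv : ∀ s ∈ S, T.arc s v) :
    T.arc u v := by
  refine (T.total u v huv).resolve_right fun hvu => hT v u ⟨hvu, ?_⟩
  obtain ⟨a, b, c, rfl, hab, hbc, hca⟩ := hS
  have hmem : ∀ s ∈ ({a, b, c} : Set V), s ∈ T.arcNbhd v u := fun s hs => ⟨hu s hs, hv s hs⟩
  exact ⟨a, b, c, hmem a (by simp), hmem b (by simp), hmem c (by simp), hab, hbc, hca⟩

variable {X : ℕ → Set V} {L : ℕ} {w : V}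

theorem IsC3Chain.arc_succ_of_arc (hX : T.IsC3Chain X L) (hT : T.IsLight) {i : ℕ}
    (hi : i + 1 < L) (hw : w ∉ X (i + 1)) (h : ∀ x ∈ X i, T.arc w x) :
    ∀ x ∈ X (i + 1), T.arc w x := fun x hx =>
  hT.arc_of_triangle_between_s13 (hX.1 i (by omega)) (fun hwx => hw (hwx ▸ hx)) h
    fun s hs => hX.2.2 i hi s hs x hx

theorem IsC3Chain.arc_of_arc_succ (hX : T.IsC3Chain X L) (hT : T.IsLight) {i : ℕ}
    (hi : i + 1 < L) (hw : w ∉ X i) (h : ∀ x ∈ X (i + 1), T.arc x w) :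
    ∀ x ∈ X i, T.arc x w := fun x hx =>
  hT.arc_of_triangle_between_s13 (hX.1 (i + 1) hi) (fun hxw => hw (hxw ▸ hx))
    (hX.2.2 i hi x hx) h

end Tournament

theorem stmt_13_general {V : Type} (T : Tournament V) (hlight : T.IsLight)
    (L : ℕ) (X : ℕ → Set V) (hchain : T.IsC3Chain X L)
    (w : V) (hw : ∀ i < L, w ∉ X i) :
    ((∀ i < L, (∀ x ∈ X i, T.arc w x) →
        ∀ j, i ≤ j → j < L → ∀ x ∈ X j, T.arc w x) ∧
     (∀ i < L, (∀ x ∈ X i, T.arc x w) →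
        ∀ j ≤ i, ∀ x ∈ X j, T.arc x w)) := by
  constructor
  · intro i _ hwi j hij hjL
    induction j, hij using Nat.le_induction with
    | base => exact hwi
    | succ j _ ih => exact hchain.arc_succ_of_arc hlight hjL (hw _ hjL) (ih (by omega))
  · intro i hi hwi j hji
    induction hji using Nat.decreasingInduction with
    | self => exact hwi
    | of_succ j hj ih => exact hchain.arc_of_arc_succ hlight (by omega) (hw j (by omega)) ih

theorem stmt_13 {V : Type} [Fintype V] (T : Tournament V) (hlight : T.IsLight)
    (L : ℕ) (X : ℕ → Set V) (hchain : T.IsC3Chain X L)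
    (w : V) (hw : ∀ i < L, w ∉ X i) :
    ((∀ i < L, (∀ x ∈ X i, T.arc w x) →
        ∀ j, i ≤ j → j < L → ∀ x ∈ X j, T.arc w x) ∧
     (∀ i < L, (∀ x ∈ X i, T.arc x w) →
        ∀ j ≤ i, ∀ x ∈ X j, T.arc x w)) :=
  stmt_13_general T hlight L X hchain w hw
end

section
/- Let T be a light tournament, let X = (X_1, …, X_ℓ) be a C₃-chain in T, and let C be the set of clear vertices with respect to X. If the induced subtournament T[C] contains a directed triangle, then T contains a C₃-chain of length ℓ+1. -/
/-!
In a light tournament a directed triangle `X` sends every vertex that dominates it to every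
vertex it dominates, since otherwise the backward arc would have `X` in its arc neighbourhood.
A directed triangle cannot be split by such a one-way cut, so a triangle `Y` of clear vertices
lies entirely on one side of each `X i`. Inserting `Y` into the chain just before the first
`X i` that it dominates (or at the end) gives a longer `C₃`-chain.
-/

/-- The sequence `f 0, …, f (m - 1), a, f m, f (m + 1), …`. -/
def insertAt {α : Type*} (f : ℕ → α) (m : ℕ) (a : α) (j : ℕ) : α :=
  if j = m then a else f (if j < m then j else j - 1)

section insertAt

variable {α : Type*} {f : ℕ → α} {m j : ℕ} {a : α}

@[simp]
lemma insertAt_self : insertAt f m a m = a := if_pos rfl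

lemma insertAt_of_ne (h : j ≠ m) : insertAt f m a j = f (if j < m then j else j - 1) :=
  if_neg h

lemma insertAt_of_lt (h : j < m) : insertAt f m a j = f j := by
  rw [insertAt_of_ne h.ne, if_pos h]

lemma insertAt_of_gt (h : m < j) : insertAt f m a j = f (j - 1) := by
  rw [insertAt_of_ne h.ne', if_neg h.not_gt]

end insertAt

lemma Nat.exists_switch_index {L : ℕ} {P Q : ℕ → Prop} (h : ∀ i < L, P i ∨ Q i) :
    ∃ m ≤ L, (∀ i, m = i + 1 → Q i) ∧ (m < L → P m) := by
  classical
  have hex : ∃ n, n = L ∨ P n := ⟨L, Or.inl rfl⟩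
  have hle : Nat.find hex ≤ L := Nat.find_le (Or.inl rfl)
  refine ⟨Nat.find hex, hle, fun i hi => ?_, fun hlt => (Nat.find_spec hex).resolve_left hlt.ne⟩
  have hmin := Nat.find_min hex (show i < Nat.find hex by omega)
  exact (h i (by omega)).resolve_left fun hP => hmin (Or.inr hP)

namespace Tournament

variable {V : Type} {T : Tournament V}

lemma IsTriangle.subset_or_subset_of_beats {Y A B : Set V} (hY : T.IsTriangle Y)
    (hAB : T.Beats A B) (hYAB : Y ⊆ A ∪ B) : Y ⊆ A ∨ Y ⊆ B := by
  obtain ⟨a, b, c, rfl, hab, hbc, hca⟩ := hY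
  have noBack : ∀ u v, T.arc u v → u ∈ B → v ∈ A → False :=
    fun u v huv hu hv => T.asymm _ _ (hAB v hv u hu) huv
  simp only [Set.insert_subset_iff, Set.singleton_subset_iff, Set.mem_union] at hYAB ⊢
  obtain ⟨ha, hb, hc⟩ := hYAB
  by_cases haA : a ∈ A
  · have hcA : c ∈ A := hc.resolve_right fun hcB => noBack c a hca hcB haA
    have hbA : b ∈ A := hb.resolve_right fun hbB => noBack b c hbc hbB hcA
    exact Or.inl ⟨haA, hbA, hcA⟩
  · have haB : a ∈ B := ha.resolve_left haA
    have hbB : b ∈ B := hb.resolve_left fun hbA => noBack a b hab haB hbA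
    have hcB : c ∈ B := hc.resolve_left fun hcA => noBack b c hbc hbB hcA
    exact Or.inr ⟨haB, hbB, hcB⟩

lemma IsLight.beats_of_isTriangle (hT : T.IsLight) {X : Set V} (hX : T.IsTriangle X) :
    T.Beats {u | ∀ x ∈ X, T.arc u x} {w | ∀ x ∈ X, T.arc x w} := by
  obtain ⟨p, q, r, rfl, hpq, hqr, hrp⟩ := hX
  intro u hu w hw
  simp only [Set.mem_ofPred_eq, Set.mem_insert_iff, Set.mem_singleton_iff, forall_eq_or_imp,
    forall_eq] at hu hw
  have huw : u ≠ w := by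
    rintro rfl
    exact T.asymm _ _ hu.1 hw.1
  exact (T.total u w huw).resolve_right fun hwu =>
    hT w u ⟨hwu, p, q, r, ⟨hu.1, hw.1⟩, ⟨hu.2.1, hw.2.1⟩, ⟨hu.2.2, hw.2.2⟩, hpq, hqr, hrp⟩

lemma IsLight.beats_or_beats_of_isTriangle (hT : T.IsLight) {X Y : Set V}
    (hX : T.IsTriangle X) (hY : T.IsTriangle Y)
    (hYX : ∀ y ∈ Y, (∀ x ∈ X, T.arc y x) ∨ (∀ x ∈ X, T.arc x y)) :
    T.Beats Y X ∨ T.Beats X Y := by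
  rcases hY.subset_or_subset_of_beats (hT.beats_of_isTriangle hX) hYX with h | h
  · exact Or.inl fun y hy x hx => h hy x hx
  · exact Or.inr fun x hx y hy => h hy x hx

lemma IsC3Chain.insertAt {X : ℕ → Set V} {L m : ℕ} {Y : Set V} (hX : T.IsC3Chain X L)
    (hm : m ≤ L) (hY : T.IsTriangle Y) (hYX : ∀ i < L, Disjoint Y (X i))
    (hprev : ∀ i, m = i + 1 → T.Beats (X i) Y) (hnext : m < L → T.Beats Y (X m)) :
    T.IsC3Chain (insertAt X m Y) (L + 1) := by
  obtain ⟨htri, hdisj, hbeats⟩ := hX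
  refine ⟨fun j hj => ?_, fun i hi j hj hij => ?_, fun i hi => ?_⟩
  · rcases lt_trichotomy j m with h | rfl | h
    · rw [insertAt_of_lt h]; exact htri j (by omega)
    · rw [insertAt_self]; exact hY
    · rw [insertAt_of_gt h]; exact htri _ (by omega)
  · have hidx : ∀ k < L + 1, k ≠ m → (if k < m then k else k - 1) < L := by
      intros; split_ifs <;> omega
    rcases eq_or_ne i m with rfl | him
    · rw [insertAt_self, insertAt_of_ne hij.symm]
      exact hYX _ (hidx j hj hij.symm)
    rcases eq_or_ne j m with rfl | hjm
    · rw [insertAt_self, insertAt_of_ne him]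
      exact (hYX _ (hidx i hi him)).symm
    rw [insertAt_of_ne him, insertAt_of_ne hjm]
    exact hdisj _ (hidx i hi him) _ (hidx j hj hjm) (by split_ifs <;> omega)
  · rcases lt_trichotomy (i + 1) m with h | h | h
    · rw [insertAt_of_lt h, insertAt_of_lt (by omega)]
      exact hbeats i (by omega)
    · rw [insertAt_of_lt (by omega), h, insertAt_self]
      exact hprev i h.symm
    · rw [insertAt_of_gt h, Nat.add_sub_cancel]
      rcases (Nat.le_of_lt_succ h).eq_or_lt with rfl | h'
      · rw [insertAt_self]
        exact hnext (by omega)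
      · rw [insertAt_of_gt h']
        simpa [Nat.sub_add_cancel (by omega : 1 ≤ i)] using hbeats (i - 1) (by omega)

end Tournament

theorem stmt_14_general {V : Type} (T : Tournament V) (hlight : T.IsLight)
    (L : ℕ) (X : ℕ → Set V) (hchain : T.IsC3Chain X L)
    (C : Set V)
    (hC : C = {w | (∀ i < L, w ∉ X i) ∧
      ∀ i < L, (∀ x ∈ X i, T.arc w x) ∨ (∀ x ∈ X i, T.arc x w)})
    (htri : ∃ a ∈ C, ∃ b ∈ C, ∃ c ∈ C, T.arc a b ∧ T.arc b c ∧ T.arc c a) :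
    ∃ Y : ℕ → Set V, T.IsC3Chain Y (L + 1) := by
  obtain ⟨a, ha, b, hb, c, hc, hab, hbc, hca⟩ := htri
  have hY : T.IsTriangle {a, b, c} := ⟨a, b, c, rfl, hab, hbc, hca⟩
  have hYC : {a, b, c} ⊆ C := by simp [Set.insert_subset_iff, ha, hb, hc]
  subst hC
  have hdisj : ∀ i < L, Disjoint {a, b, c} (X i) :=
    fun i hi => Set.disjoint_left.2 fun y hy => (hYC hy).1 i hi
  have hside : ∀ i < L, T.Beats {a, b, c} (X i) ∨ T.Beats (X i) {a, b, c} := fun i hi =>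
    hlight.beats_or_beats_of_isTriangle (hchain.1 i hi) hY fun y hy => (hYC hy).2 i hi
  obtain ⟨m, hm, hprev, hnext⟩ := Nat.exists_switch_index hside
  exact ⟨_, hchain.insertAt hm hY hdisj hprev hnext⟩

theorem stmt_14 {V : Type} [Fintype V] (T : Tournament V) (hlight : T.IsLight)
    (L : ℕ) (X : ℕ → Set V) (hchain : T.IsC3Chain X L)
    (C : Set V)
    (hC : C = {w | (∀ i < L, w ∉ X i) ∧
      ∀ i < L, (∀ x ∈ X i, T.arc w x) ∨ (∀ x ∈ X i, T.arc x w)})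
    (htri : ∃ a ∈ C, ∃ b ∈ C, ∃ c ∈ C, T.arc a b ∧ T.arc b c ∧ T.arc c a) :
    ∃ Y : ℕ → Set V, T.IsC3Chain Y (L + 1) :=
  stmt_14_general T hlight L X hchain C hC htri
end

section
/- Let T be a light tournament, let X = (X_1, …, X_ℓ) be a C₃-chain in T, let C be the set of clear vertices, and let U be the set of vertices outside the chain that are not clear. Let a be a vertex of X_1. Then every vertex w ∈ U with w→a has both an in-neighbor and an out-neighbor among the three vertices of X_1. -/
/-!
If `w` beat all of `X 0`, lightness would propagate this along the chain: when `w ⇒ X i ⇒ x`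
for some `x ∈ X (i+1)`, an arc `x → w` would have the triangle `X i` in its arc neighborhood.
So `w` would beat every triangle of the chain and be clear.
-/

namespace Tournament

variable {V : Type} {T : Tournament V}

theorem IsLight.arc_of_beats_triangle (hT : T.IsLight) {S : Set V} (hS : T.IsTriangle S)
    {w x : V} (hne : w ≠ x) (hwS : ∀ s ∈ S, T.arc w s) (hSx : ∀ s ∈ S, T.arc s x) :
    T.arc w x := by
  refine (T.total w x hne).resolve_right fun hxw => ?_
  obtain ⟨p, q, r, rfl, hpq, hqr, hrp⟩ := hS
  have hN : ∀ s ∈ ({p, q, r} : Set V), s ∈ T.arcNbhd x w := fun s hs => ⟨hwS s hs, hSx s hs⟩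
  exact hT x w ⟨hxw, p, q, r, hN p (by simp), hN q (by simp), hN r (by simp), hpq, hqr, hrp⟩

theorem IsLight.beats_chain_of_beats_head (hT : T.IsLight) {X : ℕ → Set V} {L : ℕ}
    (hX : T.IsC3Chain X L) {w : V} (hwX : ∀ i < L, w ∉ X i) (hw0 : ∀ x ∈ X 0, T.arc w x) :
    ∀ i < L, ∀ x ∈ X i, T.arc w x := by
  intro i
  induction i with
  | zero => exact fun _ => hw0
  | succ i ih =>
    intro hi x hx
    exact hT.arc_of_beats_triangle (hX.1 i (by omega)) (fun h => hwX _ hi (h ▸ hx))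
      (ih (by omega)) (fun s hs => hX.2.2 i hi s hs x hx)

end Tournament

theorem stmt_15_general {V : Type} (T : Tournament V) (hlight : T.IsLight)
    (L : ℕ) (hL : 1 ≤ L) (X : ℕ → Set V) (hchain : T.IsC3Chain X L)
    (a : V) (ha : a ∈ X 0)
    (w : V) (hwout : ∀ i < L, w ∉ X i)
    (hwnotclear : ¬ (∀ i < L, (∀ x ∈ X i, T.arc w x) ∨ (∀ x ∈ X i, T.arc x w)))
    (hwa : T.arc w a) :
    (∃ x ∈ X 0, T.arc x w) ∧ (∃ x ∈ X 0, T.arc w x) := by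
  refine ⟨?_, a, ha, hwa⟩
  by_contra! hno
  have hw0 : ∀ x ∈ X 0, T.arc w x := fun x hx =>
    (T.total w x (by rintro rfl; exact hwout 0 hL hx)).resolve_right (hno x hx)
  exact hwnotclear fun i hi => Or.inl (hlight.beats_chain_of_beats_head hchain hwout hw0 i hi)

theorem stmt_15 {V : Type} [Fintype V] (T : Tournament V) (hlight : T.IsLight)
    (L : ℕ) (hL : 1 ≤ L) (X : ℕ → Set V) (hchain : T.IsC3Chain X L)
    (a : V) (ha : a ∈ X 0)
    (w : V) (hwout : ∀ i < L, w ∉ X i)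
    (hwnotclear : ¬ (∀ i < L, (∀ x ∈ X i, T.arc w x) ∨ (∀ x ∈ X i, T.arc x w)))
    (hwa : T.arc w a) :
    (∃ x ∈ X 0, T.arc x w) ∧ (∃ x ∈ X 0, T.arc w x) :=
  stmt_15_general T hlight L hL X hchain a ha w hwout hwnotclear hwa
end
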